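/- arXiv:1804.10408 — 7 statements merged into one kernel-verified Lean document; each statement's English description precedes it below -/
import Mathlib

section
/- For almost every x in [0,1), the normalized count of points of the lattice x + 2^n ℤ lying in a measurable set C ⊆ [0,1), i.e. #((x + 2^n ℤ) ∩ C) / 2^{-n}, tends to the Lebesgue measure of C as n → -∞. -/
/-!
Write `dyadicAvg m E x = 2⁻ᵐ · #((x + 2⁻ᵐℤ) ∩ E)`. It is `2⁻ᵐ`-periodic in `x`, and unfolding
the lattice sum and translating gives `∫_{[0,1) ∩ P} dyadicAvg m E = μ(E ∩ P)` for every
`2⁻ᵐ`-periodic set `P`: the averages are conditional expectations of `1_E` on a decreasing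
sequence of σ-algebras, i.e. a reverse martingale. Splitting `{sup_m dyadicAvg m E > ε}` according
to the last index at which the average exceeds `ε` gives Doob's maximal inequality
`ε · μ([0,1) ∩ {sup_m dyadicAvg m E > ε}) ≤ μ(E)`.

For a union `V` of dyadic intervals of length `2⁻ᴺ`, `dyadicAvg m V = μ(V)` once `m ≥ N`. Covering
`E` by an open set `U` with `μ(U) ≤ μ(E) + ε`, exhausting `U` by such unions and applying the
maximal inequality to the remainders shows `limsup_m dyadicAvg m E ≤ μ(E)` almost everywhere.
The same bound for `[0,1) \ C`, whose averages add up with those of `C` to `1`, gives the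
matching lower bound.
-/

open MeasureTheory Filter Set Function Topology
open scoped ENNReal

noncomputable def latticeCount (d : ℝ) (E : Set ℝ) (x : ℝ) : ℝ≥0∞ :=
  Measure.count ((fun k : ℤ => x + k * d) ⁻¹' E)

section latticeCount

variable {d : ℝ} {E F : Set ℝ}

lemma latticeCount_eq_tsum (d : ℝ) (E : Set ℝ) (x : ℝ) :
    latticeCount d E x = ∑' k : ℤ, E.indicator 1 (x + k * d) := by
  rw [latticeCount, ← lintegral_indicator_one (MeasurableSet.of_discrete), lintegral_count]
  rfl

lemma latticeCount_mono (h : E ⊆ F) (x : ℝ) : latticeCount d E x ≤ latticeCount d F x :=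
  measure_mono fun _ hk => h hk

lemma latticeCount_union_le (E F : Set ℝ) (x : ℝ) :
    latticeCount d (E ∪ F) x ≤ latticeCount d E x + latticeCount d F x :=
  measure_union_le _ _

lemma latticeCount_union (h : Disjoint E F) (x : ℝ) :
    latticeCount d (E ∪ F) x = latticeCount d E x + latticeCount d F x :=
  measure_union (h.preimage _) MeasurableSet.of_discrete

lemma latticeCount_iUnion {ι : Type*} [Countable ι] {s : ι → Set ℝ}
    (hs : Pairwise (Disjoint on s)) (x : ℝ) :
    latticeCount d (⋃ i, s i) x = ∑' i, latticeCount d (s i) x := by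
  rw [latticeCount, preimage_iUnion]
  exact measure_iUnion (fun _ _ hij => (hs hij).preimage _) fun _ => MeasurableSet.of_discrete

lemma periodic_latticeCount (d : ℝ) (E : Set ℝ) : Periodic (latticeCount d E) d := fun x => by
  simp only [latticeCount_eq_tsum]
  conv_rhs => rw [← (Equiv.addRight 1).tsum_eq]
  congr! 2 with k
  rw [Equiv.coe_addRight, Int.cast_add, Int.cast_one, add_mul, one_mul, add_right_comm, add_assoc]

lemma measurable_latticeCount (hE : MeasurableSet E) : Measurable (latticeCount d E) := by
  simp_rw [funext (latticeCount_eq_tsum d E)]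
  exact Measurable.tsum fun k => (measurable_const.indicator hE).comp (measurable_add_const _)

lemma latticeCount_Ico_add_self (hd : 0 < d) (c x : ℝ) : latticeCount d (Ico c (c + d)) x = 1 := by
  obtain ⟨k, hk, huniq⟩ := existsUnique_add_zsmul_mem_Ico hd x c
  have : (fun j : ℤ => x + j * d) ⁻¹' Ico c (c + d) = {k} :=
    eq_singleton_iff_unique_mem.2 ⟨by simpa [zsmul_eq_mul] using hk,
      fun j hj => huniq j (by simpa [zsmul_eq_mul] using hj)⟩
  rw [latticeCount, this, Measure.count_singleton]

lemma latticeCount_Ico_add_natCast_mul (hd : 0 < d) (c x : ℝ) (n : ℕ) :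
    latticeCount d (Ico c (c + n * d)) x = n := by
  induction n with
  | zero => simp [latticeCount]
  | succ n ih =>
    have hsplit : Ico c (c + (n + 1 : ℕ) * d) =
        Ico c (c + n * d) ∪ Ico (c + n * d) (c + n * d + d) := by
      push_cast
      rw [Ico_union_Ico_eq_Ico (by nlinarith [n.cast_nonneg (α := ℝ)]) (by linarith)]
      ring_nf
    rw [hsplit, latticeCount_union Ico_disjoint_Ico_same, ih, latticeCount_Ico_add_self hd]
    push_cast
    rfl

-- Both sides are `0` when infinitely many lattice points lie in `E`.
lemma toReal_latticeCount (d : ℝ) (E : Set ℝ) (x : ℝ) :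
    (latticeCount d E x).toReal = Nat.card {k : ℤ // x + k * d ∈ E} := by
  change (Measure.count {k : ℤ | x + k * d ∈ E}).toReal = Nat.card {k : ℤ | x + k * d ∈ E}
  rw [Measure.count_apply MeasurableSet.of_discrete, Nat.card_coe_set_eq, Set.ncard_def]
  generalize Set.encard _ = n
  induction n using ENat.recTopCoe <;> simp

lemma setLIntegral_latticeCount (hF : MeasurableSet F) (S : Set ℝ) :
    ∫⁻ x in S, latticeCount d F x = ∑' k : ℤ, volume ((· + k * d) ⁻¹' F ∩ S) := by
  simp_rw [latticeCount_eq_tsum]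
  rw [lintegral_tsum (f := fun (k : ℤ) x => F.indicator 1 (x + k * d)) fun k =>
    ((measurable_const.indicator hF).comp (measurable_add_const _)).aemeasurable]
  refine tsum_congr fun k => ?_
  rw [← Measure.restrict_apply (hF.preimage (measurable_add_const _)), ← lintegral_indicator_one
    (hF.preimage (measurable_add_const _))]
  rfl

lemma setLIntegral_inter_latticeCount_comm {A P : Set ℝ} (hA : MeasurableSet A)
    (hF : MeasurableSet F) (hP : Periodic (· ∈ P) d) :
    ∫⁻ x in A ∩ P, latticeCount d F x = ∫⁻ x in F ∩ P, latticeCount d A x := by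
  rw [setLIntegral_latticeCount hF, setLIntegral_latticeCount hA, ← (Equiv.neg ℤ).tsum_eq]
  refine tsum_congr fun k => ?_
  conv_lhs => rw [← measure_preimage_add_right volume (k * d)]
  congr 1
  ext x
  have hxP : x + k * d ∈ P ↔ x ∈ P := iff_of_eq (hP.int_mul k x)
  simp only [mem_inter_iff, mem_preimage, Equiv.neg_apply, Int.cast_neg, neg_mul,
    add_neg_cancel_right, hxP]
  tauto

end latticeCount

lemma inv_two_pow_eq_of_le {N m : ℕ} (h : N ≤ m) :
    ((2:ℝ) ^ N)⁻¹ = (2 ^ (m - N) : ℕ) * ((2:ℝ) ^ m)⁻¹ := by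
  rw [← Nat.sub_add_cancel h, pow_add]
  push_cast
  rw [Nat.add_sub_cancel, mul_inv, ← mul_assoc, mul_inv_cancel₀ (by positivity), one_mul]

lemma ENNReal.inv_two_pow_eq_of_le {N m : ℕ} (h : N ≤ m) :
    ((2:ℝ≥0∞) ^ N)⁻¹ = (2 ^ m)⁻¹ * (2 ^ (m - N) : ℕ) := by
  rw [← Nat.sub_add_cancel h, pow_add, Nat.add_sub_cancel, ENNReal.mul_inv (by simp) (by simp)]
  push_cast
  rw [mul_comm, ← mul_assoc, ENNReal.mul_inv_cancel (by simp) (by simp), one_mul]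

def lastExceedSet {α β : Type*} [LinearOrder β] (u : ℕ → α → β) (ε : β) (M m : ℕ) : Set α :=
  {x | ε < u m x} ∩ ⋂ m' ∈ Ioc m M, {x | u m' x ≤ ε}

section lastExceedSet

variable {α β : Type*} [LinearOrder β]

lemma pairwiseDisjoint_lastExceedSet (u : ℕ → α → β) (ε : β) (M : ℕ) :
    (Finset.range (M + 1) : Set ℕ).PairwiseDisjoint (lastExceedSet u ε M) := by
  have key : ∀ m₁ m₂, m₁ < m₂ → m₂ ≤ M →
      Disjoint (lastExceedSet u ε M m₁) (lastExceedSet u ε M m₂) := fun m₁ m₂ hlt hle =>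
    disjoint_left.2 fun x h₁ h₂ =>
      (show ε < u m₂ x from h₂.1).not_ge (mem_iInter₂.1 h₁.2 m₂ ⟨hlt, hle⟩)
  intro m₁ h₁ m₂ h₂ hne
  simp only [Finset.coe_range, mem_Iio] at h₁ h₂
  rcases hne.lt_or_gt with hlt | hlt
  · exact key m₁ m₂ hlt (by omega)
  · exact (key m₂ m₁ hlt (by omega)).symm

lemma subset_biUnion_lastExceedSet (u : ℕ → α → β) (ε : β) (M : ℕ) :
    {x | ∃ m ≤ M, ε < u m x} ⊆ ⋃ m ∈ Finset.range (M + 1), lastExceedSet u ε M m := by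
  classical
  rintro x ⟨m, hmM, hm⟩
  let Q : ℕ → Prop := fun j => ε < u j x
  refine mem_biUnion (Finset.mem_range.2 (Nat.lt_succ_of_le (Nat.findGreatest_le (P := Q) M)))
    ⟨Nat.findGreatest_spec (P := Q) hmM hm, mem_iInter₂.2 fun m' hm' => ?_⟩
  exact not_lt.1 (Nat.findGreatest_is_greatest (P := Q) hm'.1 hm'.2)

end lastExceedSet

noncomputable def dyadicAvg (m : ℕ) (E : Set ℝ) (x : ℝ) : ℝ≥0∞ :=
  (2 ^ m)⁻¹ * latticeCount ((2:ℝ) ^ m)⁻¹ E x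

section dyadicAvg

variable {m N : ℕ} {E F : Set ℝ}

lemma measurable_dyadicAvg (hE : MeasurableSet E) (m : ℕ) : Measurable (dyadicAvg m E) :=
  (measurable_latticeCount hE).const_mul _

lemma dyadicAvg_mono (h : E ⊆ F) (m : ℕ) (x : ℝ) : dyadicAvg m E x ≤ dyadicAvg m F x := by
  simp only [dyadicAvg]
  gcongr
  exact latticeCount_mono h x

lemma dyadicAvg_union_le (E F : Set ℝ) (m : ℕ) (x : ℝ) :
    dyadicAvg m (E ∪ F) x ≤ dyadicAvg m E x + dyadicAvg m F x := by
  simp only [dyadicAvg, ← mul_add]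
  gcongr
  exact latticeCount_union_le E F x

lemma dyadicAvg_union (h : Disjoint E F) (m : ℕ) (x : ℝ) :
    dyadicAvg m (E ∪ F) x = dyadicAvg m E x + dyadicAvg m F x := by
  simp only [dyadicAvg, latticeCount_union h, mul_add]

lemma periodic_dyadicAvg (h : N ≤ m) (E : Set ℝ) : Periodic (dyadicAvg m E) ((2:ℝ) ^ N)⁻¹ := by
  intro x
  rw [inv_two_pow_eq_of_le h, dyadicAvg, dyadicAvg, (periodic_latticeCount _ E).nat_mul _ x]

lemma dyadicAvg_Ico_of_le (h : N ≤ m) (c x : ℝ) :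
    dyadicAvg m (Ico c (c + ((2:ℝ) ^ N)⁻¹)) x = (2 ^ N)⁻¹ := by
  rw [dyadicAvg, inv_two_pow_eq_of_le h, latticeCount_Ico_add_natCast_mul (by positivity),
    ENNReal.inv_two_pow_eq_of_le h]

lemma dyadicAvg_Ico_zero_one (m : ℕ) (x : ℝ) : dyadicAvg m (Ico 0 1) x = 1 := by
  simpa using dyadicAvg_Ico_of_le (Nat.zero_le m) 0 x

lemma setLIntegral_inter_dyadicAvg_comm {A P : Set ℝ} (hA : MeasurableSet A)
    (hF : MeasurableSet F) (hP : Periodic (· ∈ P) ((2:ℝ) ^ m)⁻¹) :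
    ∫⁻ x in A ∩ P, dyadicAvg m F x = ∫⁻ x in F ∩ P, dyadicAvg m A x := by
  simp only [dyadicAvg]
  rw [lintegral_const_mul _ (measurable_latticeCount hF), lintegral_const_mul _
    (measurable_latticeCount hA), setLIntegral_inter_latticeCount_comm hA hF hP]

lemma mul_volume_le_of_le_dyadicAvg {P : Set ℝ} (hF : MeasurableSet F)
    (hP : Periodic (· ∈ P) ((2:ℝ) ^ m)⁻¹) {ε : ℝ≥0∞} (hε : ∀ x ∈ P, ε ≤ dyadicAvg m F x) :
    ε * volume (Ico 0 1 ∩ P) ≤ volume (F ∩ P) :=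
  calc ε * volume (Ico 0 1 ∩ P) = ∫⁻ _ in Ico 0 1 ∩ P, ε := (setLIntegral_const _ _).symm
    _ ≤ ∫⁻ x in Ico 0 1 ∩ P, dyadicAvg m F x :=
      setLIntegral_mono (measurable_dyadicAvg hF m) fun x hx => hε x hx.2
    _ = ∫⁻ x in F ∩ P, dyadicAvg m (Ico 0 1) x :=
      setLIntegral_inter_dyadicAvg_comm measurableSet_Ico hF hP
    _ = volume (F ∩ P) := by simp [dyadicAvg_Ico_zero_one]

lemma mul_volume_exists_le_lt_dyadicAvg_le (hF : MeasurableSet F) (ε : ℝ≥0∞) (M : ℕ) :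
    ε * volume (Ico 0 1 ∩ {x | ∃ m ≤ M, ε < dyadicAvg m F x}) ≤ volume F := by
  set P := lastExceedSet (fun m => dyadicAvg m F) ε M
  have hP_meas : ∀ m, MeasurableSet (P m) := fun m =>
    (measurableSet_lt measurable_const (measurable_dyadicAvg hF m)).inter <|
      .biInter (to_countable _) fun m' _ =>
        measurableSet_le (measurable_dyadicAvg hF m') measurable_const
  -- `P m` involves only averages of index `≥ m`, all of which are `2⁻ᵐ`-periodic.
  have hP_periodic : ∀ m, Periodic (· ∈ P m) ((2:ℝ) ^ m)⁻¹ := fun m x => by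
    simp only [P, lastExceedSet, mem_inter_iff, mem_ofPred_eq, mem_iInter₂, mem_Ioc]
    rw [periodic_dyadicAvg le_rfl F x]
    congr! 3 with m' hm'
    rw [periodic_dyadicAvg hm'.1.le F x]
  have hP_disj := pairwiseDisjoint_lastExceedSet (fun m => dyadicAvg m F) ε M
  calc ε * volume (Ico 0 1 ∩ {x | ∃ m ≤ M, ε < dyadicAvg m F x})
      ≤ ε * volume (⋃ m ∈ Finset.range (M + 1), Ico 0 1 ∩ P m) := by
        rw [← inter_iUnion₂]
        gcongr
        exact subset_biUnion_lastExceedSet _ ε M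
    _ = ∑ m ∈ Finset.range (M + 1), ε * volume (Ico 0 1 ∩ P m) := by
        rw [measure_biUnion_finset (hP_disj.mono fun m => inter_subset_right)
          fun m _ => measurableSet_Ico.inter (hP_meas m), Finset.mul_sum]
    _ ≤ ∑ m ∈ Finset.range (M + 1), volume (F ∩ P m) :=
        Finset.sum_le_sum fun m _ =>
          mul_volume_le_of_le_dyadicAvg hF (hP_periodic m) fun x hx => hx.1.le
    _ = volume (⋃ m ∈ Finset.range (M + 1), F ∩ P m) :=
        (measure_biUnion_finset (hP_disj.mono fun m => inter_subset_right)
          fun m _ => hF.inter (hP_meas m)).symm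
    _ ≤ volume F := measure_mono (iUnion₂_subset fun _ _ => inter_subset_left)

theorem mul_volume_lt_iSup_dyadicAvg_le (hF : MeasurableSet F) (ε : ℝ≥0∞) :
    ε * volume (Ico 0 1 ∩ {x | ε < ⨆ m, dyadicAvg m F x}) ≤ volume F := by
  have hsets : Ico 0 1 ∩ {x | ε < ⨆ m, dyadicAvg m F x} =
      ⋃ M, Ico 0 1 ∩ {x | ∃ m ≤ M, ε < dyadicAvg m F x} := by
    ext x
    simp only [mem_inter_iff, mem_iUnion, mem_ofPred_eq, lt_iSup_iff]
    exact ⟨fun ⟨hx, m, hm⟩ => ⟨m, hx, m, le_rfl, hm⟩, fun ⟨_, hx, m, _, hm⟩ => ⟨hx, m, hm⟩⟩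
  have hmono : Monotone fun M => Ico (0:ℝ) 1 ∩ {x | ∃ m ≤ M, ε < dyadicAvg m F x} :=
    fun M M' h => inter_subset_inter_right _ fun x ⟨m, hm, hlt⟩ => ⟨m, hm.trans h, hlt⟩
  rw [hsets, hmono.measure_iUnion, ENNReal.mul_iSup]
  exact iSup_le (mul_volume_exists_le_lt_dyadicAvg_le hF ε)

end dyadicAvg

def dyadicCell (N : ℕ) (k : ℤ) : Set ℝ := (fun y => ⌊(2:ℝ) ^ N * y⌋) ⁻¹' {k}

section dyadicCell

variable {N m : ℕ} {k : ℤ} {y : ℝ}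

lemma mem_dyadicCell : y ∈ dyadicCell N k ↔ ⌊(2:ℝ) ^ N * y⌋ = k := Iff.rfl

lemma measurableSet_dyadicCell (N : ℕ) (k : ℤ) : MeasurableSet (dyadicCell N k) :=
  (Int.measurable_floor.comp (measurable_const_mul _)) (MeasurableSet.of_discrete)

lemma pairwise_disjoint_dyadicCell (N : ℕ) : Pairwise (Disjoint on dyadicCell N) :=
  fun _ _ h => (disjoint_singleton.2 h).preimage _

lemma dyadicCell_eq_Ico (N : ℕ) (k : ℤ) :
    dyadicCell N k = Ico ((k : ℝ) / 2 ^ N) (k / 2 ^ N + ((2:ℝ) ^ N)⁻¹) := by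
  ext y
  rw [mem_dyadicCell, Int.floor_eq_iff, mem_Ico, ← one_div, ← add_div, div_le_iff₀' (by positivity),
    lt_div_iff₀' (by positivity)]

lemma volume_dyadicCell (N : ℕ) (k : ℤ) : volume (dyadicCell N k) = (2 ^ N)⁻¹ := by
  rw [dyadicCell_eq_Ico, Real.volume_Ico, add_sub_cancel_left,
    ENNReal.ofReal_inv_of_pos (by positivity), ENNReal.ofReal_pow zero_le_two, ENNReal.ofReal_ofNat]

lemma dyadicAvg_dyadicCell (h : N ≤ m) (k : ℤ) (x : ℝ) :
    dyadicAvg m (dyadicCell N k) x = volume (dyadicCell N k) := by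
  rw [volume_dyadicCell, dyadicCell_eq_Ico, dyadicAvg_Ico_of_le h]

lemma dyadicCell_subset_of_le {N N' : ℕ} (h : N ≤ N') (k : ℤ) :
    dyadicCell N' k ⊆ dyadicCell N (k / 2 ^ (N' - N)) := by
  intro y hy
  rw [mem_dyadicCell] at hy ⊢
  have : (2:ℝ) ^ N * y = 2 ^ N' * y / (2 ^ (N' - N) : ℕ) := by
    obtain ⟨j, rfl⟩ := Nat.exists_eq_add_of_le h
    rw [Nat.add_sub_cancel_left, pow_add]
    push_cast
    field_simp
  rw [this, Int.floor_div_natCast, hy]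
  push_cast
  rfl

lemma abs_sub_lt_of_mem_dyadicCell {z : ℝ} (hy : y ∈ dyadicCell N k) (hz : z ∈ dyadicCell N k) :
    |y - z| < ((2:ℝ) ^ N)⁻¹ := by
  have := Int.abs_sub_lt_one_of_floor_eq_floor (hy.trans hz.symm)
  rw [← mul_sub, abs_mul, abs_of_pos (by positivity)] at this
  rwa [← one_div, lt_div_iff₀' (by positivity)]

end dyadicCell

def dyadicInner (N : ℕ) (U : Set ℝ) : Set ℝ := ⋃ k : {k : ℤ // dyadicCell N k ⊆ U}, dyadicCell N k

section dyadicInner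

variable {N m : ℕ} {U : Set ℝ}

lemma dyadicInner_subset (N : ℕ) (U : Set ℝ) : dyadicInner N U ⊆ U := iUnion_subset fun k => k.2

lemma measurableSet_dyadicInner (N : ℕ) (U : Set ℝ) : MeasurableSet (dyadicInner N U) :=
  .iUnion fun k => measurableSet_dyadicCell N k

lemma monotone_dyadicInner (U : Set ℝ) : Monotone (dyadicInner · U) := by
  intro N N' h y hy
  obtain ⟨⟨k, hkU⟩, hyk⟩ := mem_iUnion.1 hy
  set k' := ⌊(2:ℝ) ^ N' * y⌋
  have hk' : k' / 2 ^ (N' - N) = k := ((dyadicCell_subset_of_le h k' rfl).symm.trans hyk)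
  exact mem_iUnion.2 ⟨⟨k', (dyadicCell_subset_of_le h k').trans (hk' ▸ hkU)⟩, rfl⟩

lemma iUnion_dyadicInner (hU : IsOpen U) : ⋃ N, dyadicInner N U = U := by
  refine (iUnion_subset fun N => dyadicInner_subset N U).antisymm fun y hy => ?_
  obtain ⟨δ, hδ, hball⟩ := Metric.isOpen_iff.1 hU y hy
  obtain ⟨N, hN⟩ := exists_pow_lt_of_lt_one hδ one_half_lt_one
  refine mem_iUnion.2 ⟨N, mem_iUnion.2 ⟨⟨⌊(2:ℝ) ^ N * y⌋, fun z hz => hball ?_⟩, rfl⟩⟩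
  rw [Metric.mem_ball, Real.dist_eq]
  calc |z - y| < ((2:ℝ) ^ N)⁻¹ := abs_sub_lt_of_mem_dyadicCell hz rfl
    _ = (1 / 2) ^ N := by rw [one_div, inv_pow]
    _ < δ := hN

lemma dyadicAvg_dyadicInner (h : N ≤ m) (U : Set ℝ) (x : ℝ) :
    dyadicAvg m (dyadicInner N U) x = volume (dyadicInner N U) := by
  have hdisj : Pairwise (Disjoint on fun k : {k : ℤ // dyadicCell N k ⊆ U} => dyadicCell N k) :=
    fun i j hij => pairwise_disjoint_dyadicCell N (Subtype.coe_injective.ne hij)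
  rw [dyadicInner, dyadicAvg, latticeCount_iUnion hdisj, ← ENNReal.tsum_mul_left,
    measure_iUnion hdisj fun k => measurableSet_dyadicCell N k]
  exact tsum_congr fun k => dyadicAvg_dyadicCell h k x

end dyadicInner

lemma ae_limsup_dyadicAvg_le_add {E U : Set ℝ} (hEU : E ⊆ U) (hU : IsOpen U) {ε : ℝ≥0∞}
    (hε : ε ≠ 0) :
    ∀ᵐ x ∂volume.restrict (Ico 0 1), limsup (fun m => dyadicAvg m E x) atTop ≤ volume U + ε := by
  rcases eq_top_or_lt_top (volume U) with hUtop | hUfin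
  · simp [hUtop]
  have hsplit : ∀ N x, limsup (fun m => dyadicAvg m E x) atTop ≤
      volume U + ⨆ m, dyadicAvg m (U \ dyadicInner N U) x := fun N x =>
    limsup_le_of_le (by isBoundedDefault) <| eventually_atTop.2 ⟨N, fun m hm =>
      calc dyadicAvg m E x ≤ dyadicAvg m (dyadicInner N U ∪ U \ dyadicInner N U) x :=
            dyadicAvg_mono (by rwa [union_sdiff_cancel (dyadicInner_subset N U)]) m x
        _ ≤ dyadicAvg m (dyadicInner N U) x + dyadicAvg m (U \ dyadicInner N U) x :=
            dyadicAvg_union_le _ _ m x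
        _ ≤ volume U + ⨆ m, dyadicAvg m (U \ dyadicInner N U) x := by
            rw [dyadicAvg_dyadicInner hm]
            exact add_le_add (measure_mono (dyadicInner_subset N U))
              (le_iSup (fun j => dyadicAvg j (U \ dyadicInner N U) x) m)⟩
  set Z := {x | volume U + ε < limsup (fun m => dyadicAvg m E x) atTop}
  have hZ : ∀ N, ε * volume (Ico 0 1 ∩ Z) ≤ volume (U \ dyadicInner N U) := fun N =>
    (mul_le_mul_right (measure_mono (inter_subset_inter_right _ fun x hx =>
      (ENNReal.add_lt_add_iff_left hUfin.ne).1 (hx.trans_le (hsplit N x)))) ε).trans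
      (mul_volume_lt_iSup_dyadicAvg_le (hU.measurableSet.diff (measurableSet_dyadicInner N U)) ε)
  have htend : Tendsto (fun N => volume (U \ dyadicInner N U)) atTop (𝓝 0) := by
    have := tendsto_measure_iInter_atTop (μ := volume)
      (fun N => (hU.measurableSet.diff (measurableSet_dyadicInner N U)).nullMeasurableSet)
      (fun N N' h => sdiff_subset_sdiff_right (monotone_dyadicInner U h))
      ⟨0, (measure_mono sdiff_subset).trans_lt hUfin |>.ne⟩
    rwa [← sdiff_iUnion, iUnion_dyadicInner hU, sdiff_self, measure_empty] at this
  have hZ0 : volume (Ico 0 1 ∩ Z) = 0 :=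
    (mul_eq_zero.1 (nonpos_iff_eq_zero.1 (ge_of_tendsto' htend hZ))).resolve_left hε
  rw [ae_iff, Measure.restrict_apply' measurableSet_Ico, inter_comm]
  simpa only [not_le] using hZ0

theorem ae_limsup_dyadicAvg_le (E : Set ℝ) :
    ∀ᵐ x ∂volume.restrict (Ico 0 1), limsup (fun m => dyadicAvg m E x) atTop ≤ volume E := by
  have hn : ∀ n : ℕ, ∀ᵐ x ∂volume.restrict (Ico 0 1),
      limsup (fun m => dyadicAvg m E x) atTop ≤ volume E + (n : ℝ≥0∞)⁻¹ + (n : ℝ≥0∞)⁻¹ := by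
    intro n
    have hn0 : (n : ℝ≥0∞)⁻¹ ≠ 0 := ENNReal.inv_ne_zero.2 (ENNReal.natCast_ne_top n)
    obtain ⟨U, hEU, hU, hUvol⟩ := E.exists_isOpen_le_add volume hn0
    filter_upwards [ae_limsup_dyadicAvg_le_add hEU hU hn0] with x hx
    exact hx.trans (by gcongr)
  have htend : Tendsto (fun n : ℕ => volume E + (n : ℝ≥0∞)⁻¹ + (n : ℝ≥0∞)⁻¹) atTop
      (𝓝 (volume E)) := by
    simpa using (tendsto_const_nhds.add ENNReal.tendsto_inv_nat_nhds_zero).add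
      ENNReal.tendsto_inv_nat_nhds_zero
  filter_upwards [ae_all_iff.2 hn] with x hx
  exact ge_of_tendsto' htend hx

lemma ENNReal.tendsto_of_add_eq_of_limsup_le {ι : Type*} {l : Filter ι} [l.NeBot]
    {f g : ι → ℝ≥0∞} {a b c : ℝ≥0∞} (hc : c ≠ ⊤) (hfg : ∀ i, f i + g i = c) (hab : a + b = c)
    (hf : limsup f l ≤ a) (hg : limsup g l ≤ b) : Tendsto f l (𝓝 a) := by
  refine tendsto_of_le_liminf_of_limsup_le ?_ hf
  have hf' : f = fun i => c - g i := funext fun i =>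
    ENNReal.eq_sub_of_add_eq (ne_top_of_le_ne_top hc (le_add_self.trans (hfg i).le)) (hfg i)
  rw [hf', ENNReal.liminf_const_sub _ _ hc,
    ENNReal.eq_sub_of_add_eq (ne_top_of_le_ne_top hc (le_add_self.trans hab.le)) hab]
  exact tsub_le_tsub_left hg c

theorem ae_tendsto_dyadicAvg {C : Set ℝ} (hC : MeasurableSet C) (hC1 : C ⊆ Ico 0 1) :
    ∀ᵐ x ∂volume.restrict (Ico 0 1), Tendsto (fun m => dyadicAvg m C x) atTop (𝓝 (volume C)) := by
  filter_upwards [ae_limsup_dyadicAvg_le C, ae_limsup_dyadicAvg_le (Ico 0 1 \ C)] with x hC' hD'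
  refine ENNReal.tendsto_of_add_eq_of_limsup_le ENNReal.one_ne_top (fun m => ?_) ?_ hC' hD'
  · rw [← dyadicAvg_union disjoint_sdiff_right, union_sdiff_cancel hC1, dyadicAvg_Ico_zero_one]
  · rw [← measure_union disjoint_sdiff_right (measurableSet_Ico.diff hC), union_sdiff_cancel hC1,
      Real.volume_Ico, sub_zero, ENNReal.ofReal_one]

lemma toReal_dyadicAvg (m : ℕ) (E : Set ℝ) (x : ℝ) :
    (dyadicAvg m E x).toReal =
      (2:ℝ) ^ (-(m:ℤ)) * (Nat.card {k : ℤ // x + (k:ℝ) * (2:ℝ) ^ (-(m:ℤ)) ∈ E} : ℝ) := by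
  rw [zpow_neg, zpow_natCast, dyadicAvg, ENNReal.toReal_mul, toReal_latticeCount]
  simp

/-- For a.e. `x ∈ [0,1)`, `2^{-m} · #((x + 2^{-m}ℤ) ∩ C) → μ(C)` as `m → ∞`
(i.e. as the lattice mesh `2^n`, `n → -∞`, shrinks). -/
theorem lattice_count_tendsto_measure
    (C : Set ℝ) (hC : MeasurableSet C) (hC1 : C ⊆ Set.Ico (0:ℝ) 1) :
    ∀ᵐ x ∂(volume.restrict (Set.Ico (0:ℝ) 1)),
      Tendsto
        (fun m : ℕ =>
          (2:ℝ) ^ (-(m:ℤ)) *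
            (Nat.card {k : ℤ // x + (k:ℝ) * (2:ℝ) ^ (-(m:ℤ)) ∈ C} : ℝ))
        atTop (nhds (volume C).toReal) := by
  have hCfin : volume C ≠ ⊤ := ((measure_mono hC1).trans_lt measure_Ico_lt_top).ne
  filter_upwards [ae_tendsto_dyadicAvg hC hC1] with x hx
  exact ((ENNReal.tendsto_toReal hCfin).comp hx).congr fun m => toReal_dyadicAvg m C x
end

section
/- With f = ∑_{n=1}^∞ d_n · 1_{[y_n, y_n+1]}, where d_n = 1/∑_{j ∈ T_n} c_j and T_n = {j : λ_j ∈ [y_n, y_n + 1/2]}, every x ∈ [0, 1/2] satisfies ∑_{j=1}^∞ c_j f(x + λ_j) = ∞. -/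
open MeasureTheory Filter Set

/-- With `f = ∑ₙ dₙ · 1_{[yₙ, yₙ+1]}`, where `dₙ = 1 / ∑_{j ∈ Tₙ} c_j` and
`Tₙ = {j : λ_j ∈ [yₙ, yₙ + 1/2]}`, every `x ∈ [0, 1/2]` satisfies
`∑_j c_j f(x + λ_j) = ∞` (the series diverges). -/
theorem sum_diverges_on_Icc_zero_half
    (c : ℕ → ℝ) (hc : ∀ n, 0 < c n)
    (lam : ℕ → ℝ) (hmono : StrictMono lam) (htop : Tendsto lam atTop atTop)
    (y : ℕ → ℝ) (hy : ∀ n, y (n+1) - y n > 1)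
    (hinter : ∀ n, ∃ j, lam j ∈ Set.Icc (y n) (y n + 1/2))
    (d : ℕ → ℝ)
    (hd : ∀ n, d n = 1 / ∑' j : {j : ℕ // lam j ∈ Set.Icc (y n) (y n + 1/2)}, c j)
    (f : ℝ → ℝ)
    (hf : ∀ x, f x = ∑' n, d n * Set.indicator (Set.Icc (y n) (y n + 1)) 1 x) :
    ∀ x ∈ Set.Icc (0:ℝ) (1/2), ¬ Summable fun j => c j * f (x + lam j) := by
  classical
  intro x hx hsum
  obtain ⟨hx0, hx1⟩ := hx
  -- gaps of y
  have hylt : ∀ m n : ℕ, m < n → y m + 1 < y n := by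
    intro m n hmn
    induction n with
    | zero => omega
    | succ k ih =>
      rcases Nat.lt_succ_iff_lt_or_eq.mp hmn with h | h
      · have h1 := ih h
        have h2 := hy k
        linarith
      · subst h
        have := hy m
        linarith
  -- the sets T n are finite
  have hfin : ∀ n, {j : ℕ | lam j ∈ Set.Icc (y n) (y n + 1/2)}.Finite := by
    intro n
    obtain ⟨N, hN⟩ := Filter.eventually_atTop.mp
      ((Filter.tendsto_atTop.mp htop) (y n + 1/2 + 1))
    apply Set.Finite.subset (Set.finite_Iio N)
    intro j hj
    simp only [Set.mem_setOf_eq, Set.mem_Icc] at hj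
    by_contra h
    have := hN j (Set.notMem_Iio.mp h)
    linarith [hj.2]
  set S : ℕ → Finset ℕ := fun n => (hfin n).toFinset with hS
  have hmemS : ∀ n j, j ∈ S n ↔ lam j ∈ Set.Icc (y n) (y n + 1/2) := by
    intro n j
    simp [hS, Set.Finite.mem_toFinset]
  -- the tsum in hd is a finite sum
  have htsum_eq : ∀ n, (∑' j : {j : ℕ // lam j ∈ Set.Icc (y n) (y n + 1/2)}, c j)
      = ∑ j ∈ S n, c j := by
    intro n
    exact (tsum_congr_set_coe c (show {j : ℕ | lam j ∈ Set.Icc (y n) (y n + 1/2)}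
      = ((S n : Finset ℕ) : Set ℕ) by simp [hS, Set.Finite.coe_toFinset])).trans
      (Finset.tsum_subtype' (S n) c)
  -- positivity of the finite sums and the value of d
  have hSpos : ∀ n, 0 < ∑ j ∈ S n, c j := by
    intro n
    obtain ⟨j, hj⟩ := hinter n
    exact Finset.sum_pos (fun i _ => hc i) ⟨j, (hmemS n j).mpr hj⟩
  have hdval : ∀ n, d n = 1 / ∑ j ∈ S n, c j := by
    intro n; rw [hd n, htsum_eq n]
  have hdpos : ∀ n, 0 < d n := by
    intro n; rw [hdval n]; exact one_div_pos.mpr (hSpos n)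
  have hdnonneg : ∀ n, 0 ≤ d n := fun n => (hdpos n).le
  -- value of f on the relevant points
  have hfval : ∀ n j, j ∈ S n → f (x + lam j) = d n := by
    intro n j hj
    rw [hmemS] at hj
    obtain ⟨hj1, hj2⟩ := hj
    have hmem : x + lam j ∈ Set.Icc (y n) (y n + 1) := ⟨by linarith, by linarith⟩
    rw [hf]
    rw [tsum_eq_single n]
    · rw [Set.indicator_of_mem hmem]
      simp
    · intro m hmn
      have hnot : x + lam j ∉ Set.Icc (y m) (y m + 1) := by
        intro hmem'
        obtain ⟨h1, h2⟩ := hmem'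
        rcases lt_or_gt_of_ne hmn with h | h
        · have := hylt m n h
          linarith [hmem.1]
        · have := hylt n m h
          linarith [hmem.2]
      rw [Set.indicator_of_notMem hnot, mul_zero]
  -- f is nonnegative
  have hfnonneg : ∀ t : ℝ, 0 ≤ f t := by
    intro t
    rw [hf]
    apply tsum_nonneg
    intro n
    apply mul_nonneg (hdnonneg n)
    exact Set.indicator_nonneg (fun _ _ => zero_le_one) t
  have hgnonneg : ∀ j, 0 ≤ c j * f (x + lam j) :=
    fun j => mul_nonneg (hc j).le (hfnonneg _)
  -- sum of the series over S n equals 1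
  have hsum1 : ∀ n, ∑ j ∈ S n, c j * f (x + lam j) = 1 := by
    intro n
    have : ∑ j ∈ S n, c j * f (x + lam j) = ∑ j ∈ S n, c j * d n := by
      apply Finset.sum_congr rfl
      intro j hj
      rw [hfval n j hj]
    rw [this, ← Finset.sum_mul, hdval n, mul_one_div, div_self (hSpos n).ne']
  -- the S n are pairwise disjoint
  have hdisj : ∀ m n : ℕ, m ≠ n → Disjoint (S m) (S n) := by
    intro m n hmn
    rw [Finset.disjoint_left]
    intro j hjm hjn
    rw [hmemS] at hjm hjn
    rcases lt_or_gt_of_ne hmn with h | h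
    · have := hylt m n h
      linarith [hjm.2, hjn.1]
    · have := hylt n m h
      linarith [hjn.2, hjm.1]
  -- reach a contradiction
  obtain ⟨N, hN⟩ := exists_nat_gt (∑' j, c j * f (x + lam j))
  have hle : ∑ j ∈ (Finset.range N).biUnion S, c j * f (x + lam j)
      ≤ ∑' j, c j * f (x + lam j) :=
    Summable.sum_le_tsum _ (fun j _ => hgnonneg j) hsum
  have heq : ∑ j ∈ (Finset.range N).biUnion S, c j * f (x + lam j) = N := by
    rw [Finset.sum_biUnion]
    · rw [Finset.sum_congr rfl fun n _ => hsum1 n]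
      simp
    · intro a _ b _ hab
      exact hdisj a b hab
  rw [heq] at hle
  linarith
end

section
/- Suppose f = 1_E is the characteristic function of an open set E ⊆ ℝ witnessing that Λ is type 2, E = ⋃_k I_k a union of intervals, and D ⊆ D(f,Λ) is bounded with positive measure. Then there exist positive scalars α_k such that the function g with g = α_k on I_k and 0 elsewhere satisfies ∑_n c_n g(x + λ_n) = ∞ for every x ∈ D, for any fixed positive sequence (c_n). -/
open MeasureTheory Filter Set

/-- If `f = 1_E` with `E = ⋃_k I_k` a disjoint union of bounded open intervals
witnesses divergence on a bounded set `D` of positive measure, then there are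
positive scalars `α_k` such that any `g` equal to `α_k` on `I_k` and `0` off `E`
satisfies `∑_n c_n g(x + λ_n) = ∞` for every `x ∈ D`. -/
theorem scaled_characteristic_diverges
    (lam : ℕ → ℝ) (hmono : StrictMono lam) (hnonneg : ∀ n, 0 ≤ lam n)
    (htop : Tendsto lam atTop atTop)
    (c : ℕ → ℝ) (hc : ∀ n, 0 < c n)
    (I : ℕ → Set ℝ) (hI : ∀ k, ∃ a b : ℝ, I k = Set.Ioo a b)
    (hIdisj : Pairwise (Function.onFun Disjoint I))
    (E : Set ℝ) (hE : E = ⋃ k, I k)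
    (D : Set ℝ) (hDb : Bornology.IsBounded D) (hDmeas : MeasurableSet D)
    (hDpos : 0 < volume D)
    (hDdiv : ∀ x ∈ D, ¬ Summable fun n => Set.indicator E (1 : ℝ → ℝ) (x + lam n)) :
    ∃ α : ℕ → ℝ, (∀ k, 0 < α k) ∧
      ∀ g : ℝ → ℝ,
        (∀ k, ∀ x ∈ I k, g x = α k) → (∀ x, x ∉ E → g x = 0) →
        ∀ x ∈ D, ¬ Summable fun n => c n * g (x + lam n) := by
  -- bound for D
  obtain ⟨M, hM⟩ := hDb.subset_closedBall 0
  -- for each k, pick the right endpoint b k of I k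
  choose a b hab using hI
  -- for each k, pick N k beyond which lam n > b k + M
  have hN : ∀ k : ℕ, ∃ N : ℕ, ∀ n ≥ N, lam n > b k + M := by
    intro k
    have := htop.eventually (eventually_gt_atTop (b k + M))
    exact (eventually_atTop.mp this)
  choose N hNspec using hN
  -- define α
  refine ⟨fun k => 1 + ∑ n ∈ Finset.range (N k), (c n)⁻¹, ?_, ?_⟩
  · intro k
    have : (0:ℝ) ≤ ∑ n ∈ Finset.range (N k), (c n)⁻¹ :=
      Finset.sum_nonneg fun n _ => (inv_nonneg).mpr (hc n).le
    linarith
  · intro g hgI hgE x hx hsum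
    apply hDdiv x hx
    refine Summable.of_nonneg_of_le (fun n => ?_) (fun n => ?_) hsum
    · exact Set.indicator_nonneg (fun _ _ => zero_le_one) _
    · by_cases hmem : x + lam n ∈ E
      · rw [Set.indicator_of_mem hmem]
        rw [hE] at hmem
        obtain ⟨k, hk⟩ := Set.mem_iUnion.mp hmem
        rw [hgI k _ hk]
        -- lam n ≤ b k + M, so n < N k
        have hxM : -M ≤ x := by
          have := hM hx
          rw [Metric.mem_closedBall, Real.dist_eq, sub_zero] at this
          linarith [abs_le.mp this]
        have hlt : x + lam n < b k := by
          rw [hab k] at hk; exact hk.2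
        have hn : n < N k := by
          by_contra h
          have := hNspec k n (not_lt.mp h)
          linarith
        have hinv : (c n)⁻¹ ≤ 1 + ∑ m ∈ Finset.range (N k), (c m)⁻¹ := by
          have h1 : (c n)⁻¹ ≤ ∑ m ∈ Finset.range (N k), (c m)⁻¹ :=
            Finset.single_le_sum (f := fun m => (c m)⁻¹)
              (fun m _ => (inv_nonneg).mpr (hc m).le) (Finset.mem_range.mpr hn)
          linarith
        calc (1:ℝ) = c n * (c n)⁻¹ := (mul_inv_cancel₀ (hc n).ne').symm
          _ ≤ c n * (1 + ∑ m ∈ Finset.range (N k), (c m)⁻¹) :=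
            mul_le_mul_of_nonneg_left hinv (hc n).le
      · rw [Set.indicator_of_notMem hmem, hgE _ hmem, mul_zero]
end

section
/- Let Λ be an infinite discrete set of nonnegative reals, f a bounded nonnegative measurable witness function, K > 0, and ε : ℝ → (0,∞) a decreasing function tending to 0 with ∑_{l∈ℕ} ε(l - K)·#(Λ ∩ [l, l+1)) < ∞. If f̃ is a bounded nonnegative measurable function differing from f only on a set E with μ(E ∩ (x,∞)) ≤ ε(x) for all x, then for almost every x ∈ [-K, K], ∑_{λ∈Λ} f̃(x+λ) converges if and only if ∑_{λ∈Λ} f(x+λ) converges. -/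
open MeasureTheory Filter Set

/-- Lemma 2.1: modifying a bounded witness function on a set `E` with
`μ(E ∩ (x,∞)) ≤ ε(x)`, where `ε` decreases to `0` and
`∑_l ε(l-K)·#(Λ ∩ [l,l+1)) < ∞`, does not change the convergence and divergence
sets in `[-K,K]` modulo null sets. -/
theorem modification_lemma
    (lam : ℕ → ℝ) (hmono : StrictMono lam) (hnonneg : ∀ n, 0 ≤ lam n)
    (htop : Tendsto lam atTop atTop)
    (K : ℝ) (hK : 0 < K)
    (eps : ℝ → ℝ) (heps : ∀ x, 0 < eps x) (hdec : Antitone eps)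
    (heps0 : Tendsto eps atTop (nhds 0))
    (hsum : Summable fun l : ℕ =>
      eps ((l : ℝ) - K) *
        (Nat.card {i : ℕ | (l : ℝ) ≤ lam i ∧ lam i < (l : ℝ) + 1} : ℝ))
    (f ftilde : ℝ → ℝ) (hfm : Measurable f) (hfm' : Measurable ftilde)
    (hfnn : ∀ x, 0 ≤ f x) (hfnn' : ∀ x, 0 ≤ ftilde x)
    (M : ℝ) (hfb : ∀ x, f x ≤ M) (hfb' : ∀ x, ftilde x ≤ M)
    (hE : ∀ x : ℝ, volume ({y : ℝ | f y ≠ ftilde y} ∩ Set.Ioi x) ≤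
      ENNReal.ofReal (eps x)) :
    ∀ᵐ x ∂volume, x ∈ Set.Icc (-K) K →
      ((Summable fun n => ftilde (x + lam n)) ↔ Summable fun n => f (x + lam n)) := by
  classical
  set E : Set ℝ := {y : ℝ | f y ≠ ftilde y} with hEdef
  set g : ℕ → ℕ := fun n => ⌊lam n⌋₊ with hg
  -- fibers are finite
  have hfib : ∀ l : ℕ, {i : ℕ | (l : ℝ) ≤ lam i ∧ lam i < (l : ℝ) + 1}.Finite := by
    intro l
    obtain ⟨N, hN⟩ := (htop.eventually (eventually_ge_atTop ((l : ℝ) + 1))).exists_forall_of_atTop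
    refine (Set.finite_Iio N).subset fun i hi => ?_
    by_contra hli
    simp only [mem_Iio, not_lt] at hli
    exact absurd hi.2 (not_lt.mpr (by linarith [hN i hli]))
  -- key summability
  have ha : Summable (fun n => eps (lam n - K)) := by
    apply summable_of_sum_range_le (c := ∑' l : ℕ, eps ((l : ℝ) - K) *
        (Nat.card {i : ℕ | (l : ℝ) ≤ lam i ∧ lam i < (l : ℝ) + 1} : ℝ))
      (fun n => (heps _).le)
    intro N
    have hfloor : ∀ i : ℕ, ((g i : ℝ) ≤ lam i ∧ lam i < (g i : ℝ) + 1) := fun i =>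
      ⟨Nat.floor_le (hnonneg i), Nat.lt_floor_add_one _⟩
    calc ∑ i ∈ Finset.range N, eps (lam i - K)
        ≤ ∑ i ∈ Finset.range N, eps ((g i : ℝ) - K) := by
          refine Finset.sum_le_sum fun i _ => hdec (by linarith [(hfloor i).1])
      _ = ∑ l ∈ (Finset.range N).image g,
            ((Finset.range N).filter (fun i => g i = l)).card • eps ((l : ℝ) - K) :=
          Finset.sum_comp (fun l : ℕ => eps ((l : ℝ) - K)) g
      _ ≤ ∑ l ∈ (Finset.range N).image g,
            eps ((l : ℝ) - K) *
              (Nat.card {i : ℕ | (l : ℝ) ≤ lam i ∧ lam i < (l : ℝ) + 1} : ℝ) := by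
          refine Finset.sum_le_sum fun l _ => ?_
          rw [nsmul_eq_mul, mul_comm]
          refine mul_le_mul_of_nonneg_left ?_ (heps _).le
          have hsub : (((Finset.range N).filter (fun i => g i = l) : Finset ℕ) : Set ℕ) ⊆
              {i : ℕ | (l : ℝ) ≤ lam i ∧ lam i < (l : ℝ) + 1} := by
            intro i hi
            simp only [Finset.coe_filter, mem_setOf_eq] at hi
            rw [← hi.2]
            exact hfloor i
          have := Set.ncard_le_ncard hsub (hfib l)
          rw [Set.ncard_coe_finset] at this
          rw [Nat.card_coe_set_eq]
          exact_mod_cast this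
      _ ≤ ∑' l : ℕ, eps ((l : ℝ) - K) *
            (Nat.card {i : ℕ | (l : ℝ) ≤ lam i ∧ lam i < (l : ℝ) + 1} : ℝ) := by
          refine Summable.sum_le_tsum _ (fun l _ => ?_) hsum
          exact mul_nonneg (heps _).le (Nat.cast_nonneg _)
  -- Borel–Cantelli
  set S : ℕ → Set ℝ := fun n => Ioc (-K) K ∩ (fun x => x + lam n) ⁻¹' E with hS
  have hSsum : (∑' n, volume (S n)) ≠ ⊤ := by
    have hle : ∀ n, volume (S n) ≤ ENNReal.ofReal (eps (lam n - K)) := by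
      intro n
      have hsub : S n ⊆ (fun x => x + lam n) ⁻¹' (E ∩ Set.Ioi (lam n - K)) := by
        rintro x ⟨hx1, hx2⟩
        exact ⟨hx2, by simp only [mem_Ioi]; linarith [hx1.1]⟩
      calc volume (S n) ≤ volume ((fun x => x + lam n) ⁻¹' (E ∩ Set.Ioi (lam n - K))) :=
            measure_mono hsub
        _ = volume (E ∩ Set.Ioi (lam n - K)) := measure_preimage_add_right _ _ _
        _ ≤ ENNReal.ofReal (eps (lam n - K)) := hE _
    have h1 : (∑' n, volume (S n)) ≤ ENNReal.ofReal (∑' n, eps (lam n - K)) := by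
      calc (∑' n, volume (S n)) ≤ ∑' n, ENNReal.ofReal (eps (lam n - K)) :=
            ENNReal.tsum_le_tsum hle
        _ = ENNReal.ofReal (∑' n, eps (lam n - K)) :=
            (ENNReal.ofReal_tsum_of_nonneg (fun n => (heps _).le) ha).symm
    exact ne_top_of_le_ne_top ENNReal.ofReal_ne_top h1
  have hBC := MeasureTheory.ae_eventually_notMem hSsum
  have hne : ∀ᵐ x : ℝ ∂volume, x ≠ -K := by
    have hset : {x : ℝ | ¬ x ≠ -K} = {-K} := by ext x; simp
    rw [ae_iff, hset]
    exact measure_singleton _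
  filter_upwards [hBC, hne] with x hx hx' hmem
  have hxmem : x ∈ Ioc (-K) K := ⟨lt_of_le_of_ne hmem.1 (Ne.symm hx'), hmem.2⟩
  obtain ⟨N, hN⟩ := eventually_atTop.mp hx
  have heq : ∀ m : ℕ, ftilde (x + lam (m + N)) = f (x + lam (m + N)) := by
    intro m
    have := hN (m + N) (Nat.le_add_left _ _)
    have hnotE : x + lam (m + N) ∉ E := fun hc => this ⟨hxmem, hc⟩
    simpa [hEdef, eq_comm] using not_not.mp (fun hc => hnotE hc)
  rw [← summable_nat_add_iff (f := fun n => ftilde (x + lam n)) N,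
      ← summable_nat_add_iff (f := fun n => f (x + lam n)) N]
  exact summable_congr heq
end

section
/- Let Λ be a countable set of nonnegative reals whose only accumulation point is +∞, and suppose Λ is asymptotically lacunary: there exist a > 0 and x_n → ∞ with Λ ∩ [x_n, x_n + a] = ∅ for all n. Then Λ is type 2: there exists a nonnegative continuous function f vanishing at infinity such that {x : ∑_{λ∈Λ} f(x+λ) < ∞} contains a nonempty interval and {x : ∑_{λ∈Λ} f(x+λ) = ∞} contains a nonempty interval. -/
/-!
Lacunarity gives infinitely many gaps `(λ_m - a, λ_m)` of `Λ` ending at points `λ_m` of `Λ`;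
pick a sequence `c_k` of such `λ_m` and let `f` be a train of tents of height `1 / (k + 1)` and
half-width `a / 4` centred at `c_k - a / 2`. For `|x| < a / 4` no point `x + λ` meets a tent, so
the series vanishes; for `x` near `-a / 2` the terms `λ = c_k` alone contribute `≳ 1 / (k + 1)`,
a harmonic series.
-/

open Filter Set Topology Function

noncomputable def tent (r t : ℝ) : ℝ := max 0 (1 - |t| / r)

section Tent

variable {r t : ℝ}

lemma tent_nonneg (r t : ℝ) : 0 ≤ tent r t := le_max_left _ _

lemma tent_le_one (hr : 0 < r) (t : ℝ) : tent r t ≤ 1 :=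
  max_le zero_le_one (by have := div_nonneg (abs_nonneg t) hr.le; linarith)

lemma continuous_tent (r : ℝ) : Continuous (tent r) := by
  unfold tent; fun_prop

lemma tent_eq_zero (hr : 0 < r) (ht : r ≤ |t|) : tent r t = 0 :=
  max_eq_left (by rw [sub_nonpos, le_div_iff₀ hr]; linarith)

lemma abs_lt_of_tent_ne_zero (hr : 0 < r) (ht : tent r t ≠ 0) : |t| < r :=
  not_le.mp fun h => ht (tent_eq_zero hr h)

lemma one_half_le_tent (hr : 0 < r) (ht : |t| ≤ r / 2) : 1 / 2 ≤ tent r t :=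
  le_max_of_le_right (by linarith [(div_le_iff₀ hr).mpr (by linarith : |t| ≤ 1 / 2 * r)])

end Tent

noncomputable def bumpTrain (h c : ℕ → ℝ) (r t : ℝ) : ℝ :=
  ∑ᶠ k, h k * tent r (t - c k)

section BumpTrain

variable {h c : ℕ → ℝ} {r t : ℝ}

lemma bumpTrain_nonneg (hh : ∀ k, 0 ≤ h k) (t : ℝ) : 0 ≤ bumpTrain h c r t :=
  finsum_nonneg fun k => mul_nonneg (hh k) (tent_nonneg _ _)

lemma bumpTrain_eq_zero (hr : 0 < r) (ht : ∀ k, r ≤ |t - c k|) : bumpTrain h c r t = 0 :=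
  finsum_eq_zero_of_forall_eq_zero fun k => by rw [tent_eq_zero hr (ht k), mul_zero]

lemma bumpTrain_eq (hr : 0 < r) (hsep : Pairwise fun j k => 2 * r ≤ |c j - c k|) {k : ℕ}
    (hk : |t - c k| < r) : bumpTrain h c r t = h k * tent r (t - c k) := by
  refine finsum_eq_single _ k fun j hjk => ?_
  have hj : r ≤ |t - c j| := by
    have hjk : 2 * r ≤ |c j - c k| := hsep hjk
    have htri := abs_sub_le (c j) t (c k)
    rw [abs_sub_comm (c j) t] at htri
    linarith
  rw [tent_eq_zero hr hj, mul_zero]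

lemma half_le_bumpTrain (hr : 0 < r) (hsep : Pairwise fun j k => 2 * r ≤ |c j - c k|) {k : ℕ}
    (hh : 0 ≤ h k) (hk : |t - c k| ≤ r / 2) : h k / 2 ≤ bumpTrain h c r t := by
  rw [bumpTrain_eq hr hsep (by linarith)]
  calc h k / 2 = h k * (1 / 2) := by ring
    _ ≤ h k * tent r (t - c k) := mul_le_mul_of_nonneg_left (one_half_le_tent hr hk) hh

lemma continuous_bumpTrain (hr : 0 < r) (hc : Tendsto c atTop atTop) :
    Continuous (bumpTrain h c r) := by
  refine continuous_finsum (fun k => continuous_const.mul ((continuous_tent r).comp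
    (continuous_sub_right _))) fun x => ⟨Iio (x + 1), Iio_mem_nhds (lt_add_one x), ?_⟩
  have hfar : ∀ᶠ k in cofinite, x + 1 + r ≤ c k :=
    Nat.cofinite_eq_atTop ▸ hc.eventually_ge_atTop _
  refine (eventually_cofinite.mp hfar).subset fun k ⟨t, htk, ht⟩ hk => ?_
  have := abs_lt.mp (abs_lt_of_tent_ne_zero hr (right_ne_zero_of_mul htk))
  rw [mem_Iio] at ht
  linarith

lemma tendsto_bumpTrain_atTop (hr : 0 < r) (hsep : Pairwise fun j k => 2 * r ≤ |c j - c k|)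
    (hh : Tendsto h atTop (𝓝 0)) : Tendsto (bumpTrain h c r) atTop (𝓝 0) := by
  refine Metric.tendsto_nhds.mpr fun ε hε => ?_
  have hsmall : {k | ¬ |h k| < ε}.Finite := by
    have := Metric.tendsto_nhds.mp hh ε hε
    rw [← Nat.cofinite_eq_atTop] at this
    simpa only [Real.dist_eq, sub_zero] using eventually_cofinite.mp this
  filter_upwards [(eventually_all_finite hsmall).mpr fun k _ => eventually_ge_atTop (c k + r)]
    with t ht
  rw [Real.dist_eq, sub_zero]
  by_cases hnear : ∃ k, |t - c k| < r
  · obtain ⟨k, hk⟩ := hnear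
    have hhk : |h k| < ε := by
      by_contra hbig
      linarith [(abs_lt.mp hk).2, ht k hbig]
    rw [bumpTrain_eq hr hsep hk, abs_mul, abs_of_nonneg (tent_nonneg _ _)]
    exact (mul_le_of_le_one_right (abs_nonneg _) (tent_le_one hr _)).trans_lt hhk
  · push Not at hnear
    rwa [bumpTrain_eq_zero hr hnear, abs_zero]

end BumpTrain

section Gaps

variable {lam : ℕ → ℝ} {a : ℝ}

/-- Take `λ_m` the first point of `Λ` beyond a gap `[x, x + a]`. -/
lemma frequently_gap_before (hmono : StrictMono lam) (htop : Tendsto lam atTop atTop)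
    (hlac : ∀ N : ℝ, ∃ x ≥ N, ∀ i, lam i ∉ Icc x (x + a)) :
    ∃ᶠ m in atTop, ∀ n, lam n ∉ Ioo (lam m - a) (lam m) := by
  classical
  refine frequently_atTop.mpr fun M => ?_
  obtain ⟨x, hxM, hx⟩ := hlac (lam M - a)
  have hex : ∃ m, x + a < lam m := (htop.eventually_gt_atTop (x + a)).exists
  refine ⟨Nat.find hex, (hmono.lt_iff_lt.mp (by linarith [Nat.find_spec hex])).le, ?_⟩
  rintro n ⟨hn₁, hn₂⟩
  have hle : lam n ≤ x + a := not_lt.mp (Nat.find_min hex (hmono.lt_iff_lt.mp hn₂))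
  exact hx n ⟨by linarith [Nat.find_spec hex], hle⟩

lemma pairwise_le_abs_sub_of_gap {c : ℕ → ℝ} (hc : Injective c)
    (hgap : ∀ j k, c j ∉ Ioo (c k - a) (c k)) : Pairwise fun j k => a ≤ |c j - c k| := by
  intro j k hjk
  rcases (hc.ne hjk).lt_or_gt with hlt | hlt
  · rw [abs_sub_comm, abs_of_pos (sub_pos.mpr hlt)]
    by_contra! hclose
    exact hgap j k ⟨by linarith, hlt⟩
  · rw [abs_of_pos (sub_pos.mpr hlt)]
    by_contra! hclose
    exact hgap k j ⟨by linarith, hlt⟩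

end Gaps

lemma not_summable_of_half_harmonic_le_comp {g : ℕ → ℝ} {φ : ℕ → ℕ}
    (hφ : Injective φ) (hg : ∀ k : ℕ, 1 / ((k : ℝ) + 1) / 2 ≤ g (φ k)) : ¬ Summable g := by
  intro hsum
  have hhalf : Summable fun k : ℕ => 1 / ((k : ℝ) + 1) / 2 :=
    (hsum.comp_injective hφ).of_nonneg_of_le (fun k => by positivity) hg
  apply Real.not_summable_one_div_natCast
  refine (summable_nat_add_iff 1).mp ((hhalf.mul_right 2).congr fun k => ?_)
  push_cast
  ring

theorem lacunary_implies_type_two_general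
    (lam : ℕ → ℝ) (hmono : StrictMono lam)
    (htop : Tendsto lam atTop atTop)
    (hlac : ∃ a : ℝ, 0 < a ∧ ∀ N : ℝ, ∃ x ≥ N, ∀ i, lam i ∉ Set.Icc x (x + a)) :
    ∃ f : ℝ → ℝ, Continuous f ∧ (∀ x, 0 ≤ f x) ∧
      Tendsto f atTop (nhds 0) ∧
      (∃ a b : ℝ, a < b ∧
        Set.Ioo a b ⊆ {x : ℝ | Summable fun n => f (x + lam n)}) ∧
      (∃ a b : ℝ, a < b ∧
        Set.Ioo a b ⊆ {x : ℝ | ¬ Summable fun n => f (x + lam n)}) := by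
  obtain ⟨a, ha, hlac⟩ := hlac
  obtain ⟨φ, hφ, hgap⟩ :=
    extraction_of_frequently_atTop (frequently_gap_before hmono htop hlac)
  set h : ℕ → ℝ := fun k => 1 / ((k : ℝ) + 1)
  have hh : ∀ k, 0 ≤ h k := fun k => Nat.one_div_pos_of_nat.le
  set c : ℕ → ℝ := fun k => lam (φ k) - a / 2 with hcdef
  have hsep : Pairwise fun j k => 2 * (a / 4) ≤ |c j - c k| := fun j k hjk => by
    have := pairwise_le_abs_sub_of_gap (hmono.comp hφ).injective (fun j k => hgap k (φ j)) hjk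
    simp only [hcdef, sub_sub_sub_cancel_right, comp_apply] at this ⊢
    linarith
  have hc : Tendsto c atTop atTop := by
    simpa only [hcdef, sub_eq_add_neg, comp_apply] using
      tendsto_atTop_add_const_right _ (-(a / 2)) (htop.comp hφ.tendsto_atTop)
  refine ⟨bumpTrain h c (a / 4), continuous_bumpTrain (by positivity) hc,
    bumpTrain_nonneg hh,
    tendsto_bumpTrain_atTop (by positivity) hsep tendsto_one_div_add_atTop_nhds_zero_nat,
    ⟨-(a / 4), a / 4, by linarith, fun x hx => ?_⟩,
    ⟨-(5 * a / 8), -(3 * a / 8), by linarith, fun x hx => ?_⟩⟩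
  · have hzero : ∀ n, bumpTrain h c (a / 4) (x + lam n) = 0 :=
      fun n => bumpTrain_eq_zero (by positivity) fun k => by
        by_contra! hnear
        rw [hcdef, abs_lt] at hnear
        exact hgap k n ⟨by linarith [hx.2], by linarith [hx.1]⟩
    simp only [mem_ofPred_eq, hzero, summable_zero]
  · refine not_summable_of_half_harmonic_le_comp hφ.injective fun k =>
      half_le_bumpTrain (by positivity) hsep (hh k) ?_
    rw [hcdef, abs_le]
    constructor <;> linarith [hx.1, hx.2]

/-- If `Λ` is asymptotically lacunary then `Λ` is type 2, with a witness
`f ∈ C₀⁺(ℝ)` for which the convergence set contains an interval and the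
divergence set contains an interval. -/
theorem lacunary_implies_type_two
    (lam : ℕ → ℝ) (hmono : StrictMono lam) (hnonneg : ∀ n, 0 ≤ lam n)
    (htop : Tendsto lam atTop atTop)
    (hlac : ∃ a : ℝ, 0 < a ∧ ∀ N : ℝ, ∃ x ≥ N, ∀ i, lam i ∉ Set.Icc x (x + a)) :
    ∃ f : ℝ → ℝ, Continuous f ∧ (∀ x, 0 ≤ f x) ∧
      Tendsto f atTop (nhds 0) ∧
      (∃ a b : ℝ, a < b ∧
        Set.Ioo a b ⊆ {x : ℝ | Summable fun n => f (x + lam n)}) ∧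
      (∃ a b : ℝ, a < b ∧
        Set.Ioo a b ⊆ {x : ℝ | ¬ Summable fun n => f (x + lam n)}) :=
  lacunary_implies_type_two_general lam hmono htop hlac
end

section
/- Let F_n = {(A + 2^n ℤ) ∩ [0,1) : A Lebesgue measurable}, for n ∈ -ℕ, an increasing (in n) family of σ-algebras on [0,1). Then the intersection F_{-∞} = ⋂_{n ≤ 0} F_n contains only sets of Lebesgue measure 0 or 1. -/
open MeasureTheory Set Filter Metric
open scoped ENNReal Topology

/-- If membership in `T ⊆ [0,1)` is invariant under dyadic shifts (within `[0,1)`),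
then the measure of `T` in each dyadic block of generation `m` is at most
`volume T / 2^m`. -/
lemma aux_block_bound (T : Set ℝ) (hT : MeasurableSet T) (hT1 : T ⊆ Set.Ico (0:ℝ) 1)
    (hmem : ∀ m : ℕ, ∀ x y : ℝ, x ∈ Set.Ico (0:ℝ) 1 → y ∈ Set.Ico (0:ℝ) 1 →
      ∀ k : ℤ, x = y + (k : ℝ) * ((2:ℝ)^m)⁻¹ → (x ∈ T ↔ y ∈ T))
    (m : ℕ) (j : ℤ) :
    volume (T ∩ Set.Ico ((j:ℝ) * ((2:ℝ)^m)⁻¹) (((j:ℝ)+1) * ((2:ℝ)^m)⁻¹))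
      ≤ volume T / 2^m := by
  set h : ℝ := ((2:ℝ)^m)⁻¹ with hh
  have h2m : (0:ℝ) < 2^m := by positivity
  have hpos : 0 < h := by positivity
  have hle1 : h ≤ 1 := by
    rw [hh]
    rw [inv_le_one_iff₀]
    right
    exact one_le_pow₀ (by norm_num)
  have hmul : (2:ℝ)^m * h = 1 := mul_inv_cancel₀ (ne_of_gt h2m)
  -- out of range blocks are empty
  rcases lt_or_ge j 0 with hj | hj
  · have : T ∩ Set.Ico ((j:ℝ) * h) (((j:ℝ)+1) * h) = ∅ := by
      apply Set.eq_empty_of_forall_notMem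
      rintro x ⟨hxT, hx1, hx2⟩
      have hx0 : (0:ℝ) ≤ x := (hT1 hxT).1
      have : ((j:ℝ)+1) * h ≤ 0 := by
        have : (j:ℝ) + 1 ≤ 0 := by exact_mod_cast hj
        exact mul_nonpos_of_nonpos_of_nonneg this hpos.le
      linarith
    rw [this]; simp
  rcases le_or_gt ((2:ℕ)^m : ℤ) j with hj2 | hj2
  · have : T ∩ Set.Ico ((j:ℝ) * h) (((j:ℝ)+1) * h) = ∅ := by
      apply Set.eq_empty_of_forall_notMem
      rintro x ⟨hxT, hx1, hx2⟩
      have hx0 : x < 1 := (hT1 hxT).2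
      have hj2' : (2:ℝ)^m ≤ (j:ℝ) := by exact_mod_cast hj2
      have : (1:ℝ) ≤ (j:ℝ) * h := by
        calc (1:ℝ) = (2:ℝ)^m * h := hmul.symm
        _ ≤ (j:ℝ) * h := by nlinarith
      linarith
    rw [this]; simp
  -- in-range block: translate to the base block
  have hbase : ∀ i : ℤ, 0 ≤ i → i < ((2:ℕ)^m : ℤ) →
      T ∩ Set.Ico ((i:ℝ) * h) (((i:ℝ)+1) * h)
        = (fun z => z + (-((i:ℝ) * h))) ⁻¹' (T ∩ Set.Ico 0 h) := by
    intro i hi0 hi2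
    have hi0' : (0:ℝ) ≤ (i:ℝ) := by exact_mod_cast hi0
    have hi2' : (i:ℝ) + 1 ≤ (2:ℝ)^m := by
      have : i + 1 ≤ ((2:ℕ)^m : ℤ) := hi2
      exact_mod_cast this
    have hub : ((i:ℝ)+1) * h ≤ 1 := by
      calc ((i:ℝ)+1) * h ≤ (2:ℝ)^m * h := by nlinarith
      _ = 1 := hmul
    ext z
    simp only [Set.mem_inter_iff, Set.mem_Ico, Set.mem_preimage]
    constructor
    · rintro ⟨hzT, hz1, hz2⟩
      have hz01 : z ∈ Set.Ico (0:ℝ) 1 := ⟨by nlinarith, by nlinarith⟩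
      have hz01' : z + (-((i:ℝ) * h)) ∈ Set.Ico (0:ℝ) 1 := by
        constructor <;> [linarith; nlinarith [hpos, hle1]]
      refine ⟨?_, by linarith, by linarith⟩
      exact ((hmem m z (z + (-((i:ℝ) * h))) hz01 hz01' i (by ring)).mp hzT)
    · rintro ⟨hzT, hz1, hz2⟩
      have hz01' : z + (-((i:ℝ) * h)) ∈ Set.Ico (0:ℝ) 1 := ⟨by linarith, by linarith⟩
      have hz01 : z ∈ Set.Ico (0:ℝ) 1 :=
        ⟨by nlinarith [mul_nonneg hi0' hpos.le], by nlinarith⟩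
      refine ⟨?_, by linarith, by linarith⟩
      exact ((hmem m z (z + (-((i:ℝ) * h))) hz01 hz01' i (by ring)).mpr hzT)
  have hvol : ∀ i : ℤ, 0 ≤ i → i < ((2:ℕ)^m : ℤ) →
      volume (T ∩ Set.Ico ((i:ℝ) * h) (((i:ℝ)+1) * h)) = volume (T ∩ Set.Ico 0 h) := by
    intro i hi0 hi2
    rw [hbase i hi0 hi2]
    exact measure_preimage_add_right volume _ _
  -- sum over all blocks
  have hcover : T = ⋃ i ∈ Finset.range (2^m),
      T ∩ Set.Ico (((i:ℤ):ℝ) * h) ((((i:ℤ):ℝ)+1) * h) := by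
    ext x
    simp only [Set.mem_iUnion, Set.mem_inter_iff, Set.mem_Ico, Finset.mem_range]
    constructor
    · intro hx
      have hx0 : (0:ℝ) ≤ x := (hT1 hx).1
      have hx1 : x < 1 := (hT1 hx).2
      refine ⟨⌊x * 2^m⌋.toNat, ?_, ?_, ?_, ?_⟩
      · have h1 : (⌊x * 2^m⌋ : ℝ) ≤ x * 2^m := Int.floor_le _
        have h2 : x * 2^m < 2^m := by nlinarith
        have : ⌊x * 2^m⌋ < ((2:ℕ)^m : ℤ) := by
          have : (⌊x * 2^m⌋ : ℝ) < ((2:ℕ)^m : ℤ) := by push_cast; linarith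
          exact_mod_cast this
        omega
      · exact hx
      · have h0 : (0:ℤ) ≤ ⌊x * 2^m⌋ := Int.floor_nonneg.2 (by positivity)
        have h1 : (⌊x * 2^m⌋ : ℝ) ≤ x * 2^m := Int.floor_le _
        rw [Int.toNat_of_nonneg h0, hh]
        have h3 := mul_le_mul_of_nonneg_right h1 (by positivity : (0:ℝ) ≤ ((2:ℝ)^m)⁻¹)
        have h4 : x * 2^m * ((2:ℝ)^m)⁻¹ = x := by field_simp
        linarith
      · have h0 : (0:ℤ) ≤ ⌊x * 2^m⌋ := Int.floor_nonneg.2 (by positivity)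
        have h1 : x * 2^m < ⌊x * 2^m⌋ + 1 := Int.lt_floor_add_one _
        rw [Int.toNat_of_nonneg h0, hh]
        have h3 := mul_lt_mul_of_pos_right h1 (by positivity : (0:ℝ) < ((2:ℝ)^m)⁻¹)
        have h4 : x * 2^m * ((2:ℝ)^m)⁻¹ = x := by field_simp
        linarith
    · rintro ⟨i, -, hx, -⟩
      exact hx
  have hdisj : (↑(Finset.range (2^m)) : Set ℕ).PairwiseDisjoint
      (fun i : ℕ => T ∩ Set.Ico (((i:ℤ):ℝ) * h) ((((i:ℤ):ℝ)+1) * h)) := by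
    intro a _ b _ hab
    apply Set.disjoint_left.2
    rintro x ⟨-, hx1, hx2⟩ ⟨-, hy1, hy2⟩
    rcases lt_or_gt_of_ne hab with hlt | hlt
    · have : (a:ℝ) + 1 ≤ (b:ℝ) := by exact_mod_cast hlt
      push_cast at hx1 hx2 hy1 hy2
      nlinarith
    · have : (b:ℝ) + 1 ≤ (a:ℝ) := by exact_mod_cast hlt
      push_cast at hx1 hx2 hy1 hy2
      nlinarith
  have hmeas : ∀ i : ℕ, i ∈ Finset.range (2^m) →
      MeasurableSet (T ∩ Set.Ico (((i:ℤ):ℝ) * h) ((((i:ℤ):ℝ)+1) * h)) :=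
    fun i _ => hT.inter measurableSet_Ico
  have hsum : volume T = ∑ i ∈ Finset.range (2^m),
      volume (T ∩ Set.Ico (((i:ℤ):ℝ) * h) ((((i:ℤ):ℝ)+1) * h)) := by
    conv_lhs => rw [hcover]
    exact measure_biUnion_finset hdisj hmeas
  have hconst : ∀ i ∈ Finset.range (2^m),
      volume (T ∩ Set.Ico (((i:ℤ):ℝ) * h) ((((i:ℤ):ℝ)+1) * h))
        = volume (T ∩ Set.Ico 0 h) := by
    intro i hi
    rw [Finset.mem_range] at hi
    exact hvol i (Int.ofNat_nonneg i) (by exact_mod_cast hi)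
  rw [Finset.sum_congr rfl hconst, Finset.sum_const, Finset.card_range] at hsum
  have hTtot : volume T = (2^m : ℝ≥0∞) * volume (T ∩ Set.Ico 0 h) := by
    rw [hsum]; simp [nsmul_eq_mul]
  have h2ne : ((2:ℝ≥0∞)^m) ≠ 0 := by positivity
  have h2top : ((2:ℝ≥0∞)^m) ≠ ⊤ := by
    exact ENNReal.pow_ne_top (by norm_num)
  have hbasebound : volume (T ∩ Set.Ico 0 h) ≤ volume T / 2^m := by
    rw [ENNReal.le_div_iff_mul_le (Or.inl h2ne) (Or.inl h2top), mul_comm, ← hTtot]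
  rw [hvol j hj hj2]
  exact hbasebound

/-- If a measurable set of positive measure satisfies the dyadic block bound,
its measure is at least `2/3`. -/
lemma aux_density_bound (T : Set ℝ) (hT : MeasurableSet T) (hT0 : volume T ≠ 0)
    (hb : ∀ m : ℕ, ∀ j : ℤ,
      volume (T ∩ Set.Ico ((j:ℝ) * ((2:ℝ)^m)⁻¹) (((j:ℝ)+1) * ((2:ℝ)^m)⁻¹))
        ≤ volume T / 2^m) :
    (2:ℝ≥0∞) / 3 ≤ volume T := by
  -- get a density point
  have hres : volume.restrict T ≠ 0 := by
    rwa [Ne, Measure.restrict_eq_zero]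
  have : NeBot (ae (volume.restrict T)) := ae_neBot.2 hres
  obtain ⟨x, hx⟩ := (Besicovitch.ae_tendsto_measure_inter_div volume T).exists
  -- specialize along the dyadic radii
  have hrad : Tendsto (fun m : ℕ => ((2:ℝ)^m)⁻¹) atTop (𝓝[>] 0) := by
    apply tendsto_nhdsWithin_of_tendsto_nhds_of_eventually_within
    · have : Tendsto (fun m : ℕ => ((2:ℝ)⁻¹)^m) atTop (𝓝 0) :=
        tendsto_pow_atTop_nhds_zero_of_lt_one (by norm_num) (by norm_num)
      simpa [inv_pow] using this
    · filter_upwards with m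
      have : (0:ℝ) < ((2:ℝ)^m)⁻¹ := by positivity
      exact this
  have hlim : Tendsto (fun m : ℕ =>
      volume (T ∩ closedBall x (((2:ℝ)^m)⁻¹)) / volume (closedBall x (((2:ℝ)^m)⁻¹)))
      atTop (𝓝 1) := hx.comp hrad
  -- bound each term
  have hbound : ∀ m : ℕ,
      volume (T ∩ closedBall x (((2:ℝ)^m)⁻¹)) / volume (closedBall x (((2:ℝ)^m)⁻¹))
        ≤ 3 * volume T / 2 := by
    intro m
    set h : ℝ := ((2:ℝ)^m)⁻¹ with hh
    have hpos : 0 < h := by positivity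
    set j0 : ℤ := ⌊x / h⌋ with hj0
    -- the ball is covered by three blocks
    have hcov : closedBall x h ⊆
        Set.Ico (((j0:ℝ)-1) * h) (((j0:ℝ)+2) * h) := by
      intro z hz
      rw [Real.closedBall_eq_Icc] at hz
      obtain ⟨hz1, hz2⟩ := hz
      have hfl : (j0:ℝ) * h ≤ x := by
        rw [hj0]
        have := Int.floor_le (x / h)
        calc ((⌊x / h⌋ : ℝ)) * h ≤ (x / h) * h := by nlinarith
        _ = x := by field_simp
      have hfu : x < ((j0:ℝ)+1) * h := by
        rw [hj0]
        have := Int.lt_floor_add_one (x / h)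
        calc x = (x / h) * h := by field_simp
        _ < ((⌊x / h⌋ : ℝ)+1) * h := by nlinarith
      constructor
      · nlinarith
      · nlinarith
    have hsplit : Set.Ico (((j0:ℝ)-1) * h) (((j0:ℝ)+2) * h)
        = Set.Ico (((j0:ℝ)-1) * h) ((j0:ℝ) * h) ∪ Set.Ico ((j0:ℝ) * h) (((j0:ℝ)+1) * h)
          ∪ Set.Ico (((j0:ℝ)+1) * h) (((j0:ℝ)+2) * h) := by
      rw [Set.Ico_union_Ico_eq_Ico (by nlinarith) (by nlinarith),
        Set.Ico_union_Ico_eq_Ico (by nlinarith) (by nlinarith)]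
    have hnum : volume (T ∩ closedBall x h) ≤ 3 * (volume T / 2^m) := by
      calc volume (T ∩ closedBall x h)
          ≤ volume (T ∩ (Set.Ico (((j0:ℝ)-1) * h) ((j0:ℝ) * h)
              ∪ Set.Ico ((j0:ℝ) * h) (((j0:ℝ)+1) * h)
              ∪ Set.Ico (((j0:ℝ)+1) * h) (((j0:ℝ)+2) * h))) := by
            apply measure_mono
            rw [← hsplit]
            exact Set.inter_subset_inter_right _ hcov
        _ ≤ volume (T ∩ Set.Ico (((j0:ℝ)-1) * h) ((j0:ℝ) * h))
              + volume (T ∩ Set.Ico ((j0:ℝ) * h) (((j0:ℝ)+1) * h))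
              + volume (T ∩ Set.Ico (((j0:ℝ)+1) * h) (((j0:ℝ)+2) * h)) := by
            rw [Set.inter_union_distrib_left, Set.inter_union_distrib_left]
            exact le_trans (measure_union_le _ _)
              (add_le_add_left (measure_union_le _ _) _)
        _ ≤ volume T / 2^m + volume T / 2^m + volume T / 2^m := by
            gcongr
            · have := hb m (j0 - 1)
              push_cast at this
              convert this using 4 <;> [rfl; ring]
            · have := hb m j0
              exact this
            · have := hb m (j0 + 1)
              push_cast at this
              convert this using 4 <;> [rfl; ring]
        _ = 3 * (volume T / 2^m) := by ring
    have hden : volume (closedBall x h) = 2 / 2^m := by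
      rw [Real.volume_closedBall, hh, ENNReal.ofReal_mul (by norm_num),
        ENNReal.ofReal_inv_of_pos (by positivity), ENNReal.ofReal_pow (by norm_num),
        div_eq_mul_inv]
      norm_num
    calc volume (T ∩ closedBall x h) / volume (closedBall x h)
        ≤ (3 * (volume T / 2^m)) / (2 / 2^m) := by
          rw [hden]; exact ENNReal.div_le_div_right hnum _
      _ = 3 * volume T / 2 := by
          rw [div_eq_mul_inv (3 * (volume T / 2^m)) _,
            ENNReal.inv_div (Or.inr (by norm_num)) (Or.inr (by norm_num))]
          rw [div_eq_mul_inv (volume T) ((2:ℝ≥0∞)^m), div_eq_mul_inv ((2:ℝ≥0∞)^m) 2]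
          rw [div_eq_mul_inv (3 * volume T) 2]
          have h2ne : ((2:ℝ≥0∞)^m) ≠ 0 := by positivity
          have h2top : ((2:ℝ≥0∞)^m) ≠ ⊤ := ENNReal.pow_ne_top (by norm_num)
          calc 3 * (volume T * ((2:ℝ≥0∞)^m)⁻¹) * ((2:ℝ≥0∞)^m * 2⁻¹)
              = 3 * volume T * (((2:ℝ≥0∞)^m)⁻¹ * (2:ℝ≥0∞)^m) * 2⁻¹ := by ring
            _ = 3 * volume T * 2⁻¹ := by rw [ENNReal.inv_mul_cancel h2ne h2top, mul_one]
  -- conclude 1 ≤ 3 * volume T / 2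
  have h1 : (1:ℝ≥0∞) ≤ 3 * volume T / 2 :=
    le_of_tendsto' hlim hbound
  -- so 2/3 ≤ volume T
  have h2 : (2:ℝ≥0∞) ≤ 3 * volume T := by
    rw [ENNReal.le_div_iff_mul_le (Or.inl (by norm_num)) (Or.inl (by norm_num))] at h1
    simpa using h1
  rw [ENNReal.div_le_iff_le_mul (Or.inl (by norm_num)) (Or.inl (by norm_num))]
  rwa [mul_comm]

/-- The tail σ-algebra `F_{-∞} = ⋂_{n≤0} F_n`, where
`F_n = {(A + 2^n ℤ) ∩ [0,1) : A measurable}`, contains only sets of measure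
`0` or `1`: a measurable `S ⊆ [0,1)` which for every `m` has the form
`(A + 2^{-m}ℤ) ∩ [0,1)` for some measurable `A` is null or co-null in `[0,1)`. -/
theorem tail_sigma_algebra_zero_one
    (S : Set ℝ) (hSm : MeasurableSet S) (hS1 : S ⊆ Set.Ico (0:ℝ) 1)
    (hinv : ∀ m : ℕ, ∃ A : Set ℝ, MeasurableSet A ∧
      S = {x : ℝ | x ∈ Set.Ico (0:ℝ) 1 ∧
        ∃ k : ℤ, x + (k : ℝ) * (2:ℝ) ^ (-(m:ℤ)) ∈ A}) :
    volume S = 0 ∨ volume S = 1 := by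
  -- membership invariance under dyadic shifts, for S
  have hmemS : ∀ m : ℕ, ∀ x y : ℝ, x ∈ Set.Ico (0:ℝ) 1 → y ∈ Set.Ico (0:ℝ) 1 →
      ∀ k : ℤ, x = y + (k : ℝ) * ((2:ℝ)^m)⁻¹ → (x ∈ S ↔ y ∈ S) := by
    intro m x y hx hy k hk
    obtain ⟨A, hA, hSA⟩ := hinv m
    have hpow : (2:ℝ) ^ (-(m:ℤ)) = ((2:ℝ)^m)⁻¹ := by
      rw [zpow_neg, zpow_natCast]
    constructor
    · intro hxS
      rw [hSA] at hxS ⊢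
      obtain ⟨-, k', hk'⟩ := hxS
      refine ⟨hy, k + k', ?_⟩
      rw [hpow] at hk' ⊢
      have : y + ((k:ℤ) + k' : ℤ) * ((2:ℝ)^m)⁻¹ = x + (k':ℝ) * ((2:ℝ)^m)⁻¹ := by
        push_cast
        rw [hk]; ring
      rw [this]
      exact hk'
    · intro hyS
      rw [hSA] at hyS ⊢
      obtain ⟨-, k', hk'⟩ := hyS
      refine ⟨hx, k' - k, ?_⟩
      rw [hpow] at hk' ⊢
      have : x + ((k' - k : ℤ) : ℝ) * ((2:ℝ)^m)⁻¹ = y + (k':ℝ) * ((2:ℝ)^m)⁻¹ := by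
        push_cast
        rw [hk]; ring
      rw [this]
      exact hk'
  -- and for the complement inside [0,1)
  set T : Set ℝ := Set.Ico (0:ℝ) 1 \ S with hTdef
  have hTm : MeasurableSet T := measurableSet_Ico.diff hSm
  have hT1 : T ⊆ Set.Ico (0:ℝ) 1 := Set.diff_subset
  have hmemT : ∀ m : ℕ, ∀ x y : ℝ, x ∈ Set.Ico (0:ℝ) 1 → y ∈ Set.Ico (0:ℝ) 1 →
      ∀ k : ℤ, x = y + (k : ℝ) * ((2:ℝ)^m)⁻¹ → (x ∈ T ↔ y ∈ T) := by
    intro m x y hx hy k hk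
    have := hmemS m x y hx hy k hk
    rw [hTdef]
    simp only [Set.mem_diff]
    tauto
  by_contra hcon
  push_neg at hcon
  obtain ⟨h0, h1⟩ := hcon
  -- volume facts
  have hSle : volume S ≤ 1 := by
    calc volume S ≤ volume (Set.Ico (0:ℝ) 1) := measure_mono hS1
      _ = 1 := by simp
  have hvT : volume T = 1 - volume S := by
    rw [hTdef, measure_diff hS1 hSm.nullMeasurableSet (by
      exact ne_top_of_le_ne_top (by norm_num) hSle)]
    simp
  have hT0 : volume T ≠ 0 := by
    rw [hvT]
    intro hz
    rw [tsub_eq_zero_iff_le] at hz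
    exact h1 (le_antisymm hSle hz)
  have hbS := fun m j => aux_block_bound S hSm hS1 hmemS m j
  have hbT := fun m j => aux_block_bound T hTm hT1 hmemT m j
  have hdS := aux_density_bound S hSm h0 hbS
  have hdT := aux_density_bound T hTm hT0 hbT
  -- 2/3 ≤ vS and 2/3 ≤ 1 - vS gives 4/3 ≤ 1, contradiction
  have hadd : (2:ℝ≥0∞)/3 + 2/3 ≤ volume S + volume T := add_le_add hdS hdT
  rw [hvT, add_comm (volume S), tsub_add_cancel_of_le hSle] at hadd
  have : ¬ ((2:ℝ≥0∞)/3 + 2/3 ≤ 1) := by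
    intro hle
    have h43 : (2:ℝ≥0∞)/3 + 2/3 = 4/3 := by
      rw [ENNReal.div_add_div_same]
      norm_num
    rw [h43] at hle
    have : (4:ℝ≥0∞) ≤ 3 := by
      rwa [ENNReal.div_le_iff_le_mul (Or.inl (by norm_num)) (Or.inr (by norm_num)),
        one_mul] at hle
    norm_num at this
  exact this hadd
end

section
/- For any n ∈ -ℕ and measurable C ⊆ [0,1), the function x ↦ 2^n · #((x + 2^n ℤ) ∩ C) on [0,1) is a version of the conditional expectation E(1_C | F_n), where F_n = {(A + 2^n ℤ) ∩ [0,1) : A Lebesgue measurable}; that is, for every A' ∈ F_n, ∫_{A'} 2^n · #((x + 2^n ℤ) ∩ C) dμ(x) = μ(A' ∩ C). -/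
open MeasureTheory Set

open scoped ENNReal

/-!
With `h = 2^{-m}`, write the count as `∑' k, 1_C (x + k h)` and `A'` as `S ∩ [0,1)`
with `S = A + hℤ` periodic. Substituting `y = x + k h` in each term (unfolding) turns
`∫_{S ∩ [0,1)} ∑' k, 1_C (x + k h)` into `∫_{S ∩ C} #{k | y - k h ∈ [0,1)}`, and every
`y` has exactly `2^m = h⁻¹` such `k`. Since `C ⊆ [0,1)`, `S ∩ C = A' ∩ C`.
-/

lemma tsum_indicator_one_comp_eq_encard {ι α : Type*} (s : Set α) (f : ι → α) :
    ∑' i, s.indicator (1 : α → ℝ≥0∞) (f i) = (f ⁻¹' s).encard := by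
  simp_rw [← indicator_comp_right (g := (1 : α → ℝ≥0∞)) f, ← tsum_subtype]
  exact ENNReal.tsum_set_one _

lemma natCard_eq_tsum_indicator_one_comp {ι α : Type*} {s : Set α} {f : ι → α}
    (hfin : (f ⁻¹' s).Finite) :
    (Nat.card {i // f i ∈ s} : ℝ≥0∞) = ∑' i, s.indicator 1 (f i) := by
  rw [tsum_indicator_one_comp_eq_encard, ← hfin.cast_ncard_eq, ← Nat.card_coe_set_eq]
  rfl

lemma lintegral_mul_tsum_add_zsmul {G : Type*} [MeasurableSpace G] [AddGroup G]
    [MeasurableAdd G] {μ : Measure G} [μ.IsAddRightInvariant] {f g : G → ℝ≥0∞} (hf : Measurable f)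
    (hg : Measurable g) (h : G) :
    ∫⁻ x, f x * ∑' k : ℤ, g (x + k • h) ∂μ = ∫⁻ y, g y * ∑' k : ℤ, f (y + k • h) ∂μ := by
  simp_rw [← ENNReal.tsum_mul_left]
  rw [lintegral_tsum (by fun_prop), lintegral_tsum (by fun_prop), ← (Equiv.neg ℤ).tsum_eq]
  refine tsum_congr fun k => ?_
  rw [← lintegral_add_right_eq_self _ (k • h)]
  simp [mul_comm]

section Lattice

variable {h : ℝ}

lemma setOf_add_int_mul_mem_Ico_eq (hh : 0 < h) (N : ℕ) (a y : ℝ) :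
    {k : ℤ | y + k * h ∈ Ico a (a + N * h)} =
      Finset.Ico ⌈(a - y) / h⌉ (⌈(a - y) / h⌉ + N) := by
  ext k
  have hlow : ⌈(a - y) / h⌉ ≤ k ↔ a ≤ y + k * h := by
    rw [Int.ceil_le, div_le_iff₀ hh]
    constructor <;> intro <;> linarith
  have hupp : k < ⌈(a - y) / h⌉ + N ↔ y + k * h < a + N * h := by
    rw [← sub_lt_iff_lt_add, Int.lt_ceil, lt_div_iff₀ hh]
    push_cast
    constructor <;> intro <;> linarith
  simp only [Finset.coe_Ico, mem_Ico, mem_ofPred_eq, hlow, hupp]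

lemma encard_setOf_add_int_mul_mem_Ico (hh : 0 < h) (N : ℕ) (a y : ℝ) :
    {k : ℤ | y + k * h ∈ Ico a (a + N * h)}.encard = N := by
  rw [setOf_add_int_mul_mem_Ico_eq hh, encard_coe_eq_coe_finsetCard, Int.card_Ico]
  simp

theorem lintegral_inter_Ico_tsum_indicator_add_int_mul (hh : 0 < h) (N : ℕ) (a : ℝ)
    {S C : Set ℝ} (hS : MeasurableSet S) (hper : ∀ (k : ℤ) x, x + k * h ∈ S ↔ x ∈ S)
    (hC : MeasurableSet C) :
    ∫⁻ x in S ∩ Ico a (a + N * h), ∑' k : ℤ, C.indicator 1 (x + k * h) =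
      N * volume (S ∩ C) := by
  set I := Ico a (a + N * h)
  have hSIm : MeasurableSet (S ∩ I) := hS.inter measurableSet_Ico
  have hcount (y : ℝ) : ∑' k : ℤ, I.indicator (1 : ℝ → ℝ≥0∞) (y + k * h) = N := by
    rw [tsum_indicator_one_comp_eq_encard]
    exact_mod_cast encard_setOf_add_int_mul_mem_Ico hh N a y
  have hSI (y : ℝ) (k : ℤ) : (S ∩ I).indicator (1 : ℝ → ℝ≥0∞) (y + k * h) =
      S.indicator 1 y * I.indicator 1 (y + k * h) := by
    rw [inter_indicator_one, Pi.mul_apply, ← indicator_comp_right (· + k * h),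
      show (· + k * h) ⁻¹' S = S from ext (hper k)]
    rfl
  have hunfold := lintegral_mul_tsum_add_zsmul (μ := volume)
    (measurable_one.indicator hSIm) (measurable_one.indicator hC) h
  simp only [zsmul_eq_mul] at hunfold
  calc ∫⁻ x in S ∩ I, ∑' k : ℤ, C.indicator 1 (x + k * h)
      = ∫⁻ x, (S ∩ I).indicator 1 x * ∑' k : ℤ, C.indicator 1 (x + k * h) := by
        rw [← lintegral_indicator hSIm]
        congr with x
        unfold indicator
        split_ifs <;> simp
    _ = ∫⁻ y, C.indicator 1 y * ∑' k : ℤ, (S ∩ I).indicator 1 (y + k * h) := hunfold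
    _ = ∫⁻ y, (S ∩ C).indicator (fun _ => (N : ℝ≥0∞)) y := by
        congr with y
        simp_rw [hSI, ENNReal.tsum_mul_left, hcount]
        by_cases hyS : y ∈ S <;> by_cases hyC : y ∈ C <;> simp [hyS, hyC]
    _ = N * volume (S ∩ C) := lintegral_indicator_const (hS.inter hC) _

theorem setIntegral_inter_Ico_natCard_add_int_mul_mem (hh : 0 < h) (N : ℕ) (a : ℝ)
    {S C : Set ℝ} (hS : MeasurableSet S) (hper : ∀ (k : ℤ) x, x + k * h ∈ S ↔ x ∈ S)
    (hC : MeasurableSet C) (hCI : C ⊆ Ico a (a + N * h)) :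
    ∫ x in S ∩ Ico a (a + N * h), (Nat.card {k : ℤ // x + k * h ∈ C} : ℝ) =
      N * volume.real (S ∩ C) := by
  have hcount (x : ℝ) : ∑' k : ℤ, C.indicator 1 (x + k * h) =
      (Nat.card {k : ℤ // x + k * h ∈ C} : ℝ≥0∞) :=
    (natCard_eq_tsum_indicator_one_comp <|
      (finite_of_encard_eq_coe (encard_setOf_add_int_mul_mem_Ico hh N a x)).subset
        (preimage_mono hCI)).symm
  calc ∫ x in S ∩ Ico a (a + N * h), (Nat.card {k : ℤ // x + k * h ∈ C} : ℝ)
      = ∫ x in S ∩ Ico a (a + N * h),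
          (∑' k : ℤ, C.indicator (1 : ℝ → ℝ≥0∞) (x + k * h)).toReal := by
        simp_rw [hcount, ENNReal.toReal_natCast]
    _ = (∫⁻ x in S ∩ Ico a (a + N * h), ∑' k : ℤ, C.indicator 1 (x + k * h)).toReal :=
        integral_toReal (by fun_prop) <| .of_forall fun x => by
          rw [hcount]
          exact ENNReal.natCast_lt_top _
    _ = N * volume.real (S ∩ C) := by
        rw [lintegral_inter_Ico_tsum_indicator_add_int_mul hh N a hS hper hC,
          ENNReal.toReal_mul, ENNReal.toReal_natCast, measureReal_def]

end Lattice

def latticeSaturation (h : ℝ) (A : Set ℝ) : Set ℝ := {x | ∃ k : ℤ, x + k * h ∈ A}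

lemma measurableSet_latticeSaturation (h : ℝ) {A : Set ℝ} (hA : MeasurableSet A) :
    MeasurableSet (latticeSaturation h A) := by
  have : latticeSaturation h A = ⋃ k : ℤ, (· + k * h) ⁻¹' A := by
    ext
    simp [latticeSaturation]
  exact this ▸ .iUnion fun k => measurable_add_const _ hA

lemma add_int_mul_mem_latticeSaturation_iff (h : ℝ) (A : Set ℝ) (k : ℤ) (x : ℝ) :
    x + k * h ∈ latticeSaturation h A ↔ x ∈ latticeSaturation h A := by
  refine ⟨fun ⟨j, hj⟩ => ⟨k + j, ?_⟩, fun ⟨j, hj⟩ => ⟨j - k, ?_⟩⟩ <;>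
    [convert hj using 1; convert hj using 1] <;> push_cast <;> ring

/-- The function `x ↦ 2^{-m} · #((x + 2^{-m}ℤ) ∩ C)` is a version of the
conditional expectation `E(1_C | F_m)`: for every set `A'` of the form
`(A + 2^{-m}ℤ) ∩ [0,1)` with `A` measurable,
`∫_{A'} 2^{-m} · #((x + 2^{-m}ℤ) ∩ C) dμ(x) = μ(A' ∩ C)`. -/
theorem lattice_count_is_conditional_expectation
    (m : ℕ) (C : Set ℝ) (hCm : MeasurableSet C) (hC1 : C ⊆ Set.Ico (0:ℝ) 1)
    (A A' : Set ℝ) (hAm : MeasurableSet A)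
    (hA' : A' = {x : ℝ | x ∈ Set.Ico (0:ℝ) 1 ∧
      ∃ k : ℤ, x + (k : ℝ) * (2:ℝ) ^ (-(m:ℤ)) ∈ A}) :
    ∫ x in A',
        (2:ℝ) ^ (-(m:ℤ)) *
          (Nat.card {k : ℤ // x + (k : ℝ) * (2:ℝ) ^ (-(m:ℤ)) ∈ C} : ℝ) =
      (volume (A' ∩ C)).toReal := by
  set h : ℝ := (2:ℝ) ^ (-(m:ℤ))
  have hNh : ((2 ^ m : ℕ) : ℝ) * h = 1 := by simp [h, zpow_neg, zpow_natCast]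
  have hI : Ico (0 : ℝ) 1 = Ico 0 (0 + (2 ^ m : ℕ) * h) := by rw [zero_add, hNh]
  have hA'S : A' = latticeSaturation h A ∩ Ico 0 (0 + (2 ^ m : ℕ) * h) := by
    rw [hA', ← hI, inter_comm]
    rfl
  have hA'C : A' ∩ C = latticeSaturation h A ∩ C := by
    rw [hA'S, ← hI, inter_assoc, inter_eq_right.2 hC1]
  rw [integral_const_mul, hA'S, setIntegral_inter_Ico_natCard_add_int_mul_mem (by positivity)
      _ _ (measurableSet_latticeSaturation h hAm) (add_int_mul_mem_latticeSaturation_iff h A) hCm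
      (hI ▸ hC1), ← hA'S, hA'C, ← mul_assoc, mul_comm h, hNh, one_mul, measureReal_def]
end
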